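/- arXiv:math/9807115 — 2 statements merged into one kernel-verified Lean document; each statement's English description precedes it below -/
import Mathlib

section
/- Let G be a group in which every two elements a, b satisfy [[a,b],a] = e and [[a,b],b] = e (i.e., G is nilpotent of class at most two). Let H be a subgroup of G, let x, y ∈ G, and let n be an integer such that xⁿ ∈ H and yⁿ ∈ H. Then for any group K nilpotent of class at most two and any two homomorphisms f, g : G → K agreeing on H, we have f([x,y]ⁿ) = g([x,y]ⁿ). In other words, [x,y]ⁿ lies in the dominion of H in G in the variety of nilpotent groups of class two. -/
open scoped commutatorElement

lemma comm_central {K : Type*} [Group K] (hK : ∀ a b c : K, ⁅⁅a, b⁆, c⁆ = 1)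
    (a b c : K) : Commute ⁅a, b⁆ c :=
  commutatorElement_eq_one_iff_commute.mp (hK a b c)

lemma comm_mul_left {K : Type*} [Group K] (hK : ∀ a b c : K, ⁅⁅a, b⁆, c⁆ = 1)
    (a₁ a₂ b : K) : ⁅a₁ * a₂, b⁆ = ⁅a₁, b⁆ * ⁅a₂, b⁆ := by
  have hc : ∀ z : K, ⁅a₂, b⁆ * z = z * ⁅a₂, b⁆ := fun z => (comm_central hK a₂ b z).eq
  have e2 : a₂ * b = ⁅a₂, b⁆ * b * a₂ := by simp only [commutatorElement_def]; group
  calc ⁅a₁ * a₂, b⁆ = a₁ * (a₂ * b) * a₂⁻¹ * a₁⁻¹ * b⁻¹ := by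
        simp only [commutatorElement_def]; group
    _ = a₁ * (⁅a₂, b⁆ * b * a₂) * a₂⁻¹ * a₁⁻¹ * b⁻¹ := by rw [e2]
    _ = a₁ * ⁅a₂, b⁆ * (b * a₁⁻¹ * b⁻¹) := by group
    _ = ⁅a₂, b⁆ * a₁ * (b * a₁⁻¹ * b⁻¹) := by rw [← hc a₁]
    _ = ⁅a₂, b⁆ * ⁅a₁, b⁆ := by simp only [commutatorElement_def]; group
    _ = ⁅a₁, b⁆ * ⁅a₂, b⁆ := hc ⁅a₁, b⁆

/-- the map `a ↦ ⁅a, b⁆` is a hom in class-2 groups -/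
def commHom {K : Type*} [Group K] (hK : ∀ a b c : K, ⁅⁅a, b⁆, c⁆ = 1) (b : K) : K →* K where
  toFun a := ⁅a, b⁆
  map_one' := by simp
  map_mul' a₁ a₂ := comm_mul_left hK a₁ a₂ b

lemma comm_zpow_left {K : Type*} [Group K] (hK : ∀ a b c : K, ⁅⁅a, b⁆, c⁆ = 1)
    (a b : K) (n : ℤ) : ⁅a ^ n, b⁆ = ⁅a, b⁆ ^ n := by
  simpa [commHom] using map_zpow (commHom hK b) a n

lemma comm_zpow_right {K : Type*} [Group K] (hK : ∀ a b c : K, ⁅⁅a, b⁆, c⁆ = 1)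
    (a b : K) (n : ℤ) : ⁅a, b ^ n⁆ = ⁅a, b⁆ ^ n := by
  rw [← inv_inj, ← commutatorElement_inv, comm_zpow_left hK, ← zpow_neg,
    ← commutatorElement_inv, inv_zpow, ← zpow_neg, neg_neg]

/-- In the variety of nilpotent groups of class at most two, if `x^n` and `y^n` lie in a
subgroup `H` of `G`, then `[x,y]^n` lies in the dominion of `H` in `G`. -/
theorem commutator_pow_mem_dominion_nilpotent {G : Type*} [Group G]
    (hG : ∀ a b : G, ⁅⁅a, b⁆, a⁆ = 1 ∧ ⁅⁅a, b⁆, b⁆ = 1)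
    (H : Subgroup G) (x y : G) (n : ℤ) (hx : x ^ n ∈ H) (hy : y ^ n ∈ H) :
    ∀ (K : Type*) [Group K], (∀ a b c : K, ⁅⁅a, b⁆, c⁆ = 1) →
      ∀ f g : G →* K, (∀ h ∈ H, f h = g h) → f (⁅x, y⁆ ^ n) = g (⁅x, y⁆ ^ n) := by
  intro K _ hK f g hfg
  calc f (⁅x, y⁆ ^ n) = ⁅f x, f y⁆ ^ n := by simp [map_zpow, map_commutatorElement]
    _ = ⁅f x, f (y ^ n)⁆ := by rw [map_zpow, comm_zpow_right hK]
    _ = ⁅f x, g (y ^ n)⁆ := by rw [hfg _ hy]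
    _ = ⁅f x, g y⁆ ^ n := by rw [map_zpow, comm_zpow_right hK]
    _ = ⁅f (x ^ n), g y⁆ := by rw [map_zpow, comm_zpow_left hK]
    _ = ⁅g (x ^ n), g y⁆ := by rw [hfg _ hx]
    _ = ⁅g x, g y⁆ ^ n := by rw [map_zpow, comm_zpow_left hK]
    _ = g (⁅x, y⁆ ^ n) := by simp [map_zpow, map_commutatorElement]
end

section
/- Let G be a metabelian group (i.e., its commutator subgroup is abelian), H a subgroup of G, and x, y, z ∈ G with x in the commutator subgroup of G. Suppose x ∈ H, [x,y] ∈ H, and [x,z] ∈ H. Then for any metabelian group K and any homomorphisms f, g : G → K with f|_H = g|_H, we have f([x,y,z]) = g([x,y,z]); that is, [[x,y],z] lies in the dominion of H in G in the variety of metabelian groups. -/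
open scoped commutatorElement

/-- A three-element commuting rearrangement. -/
private lemma three_swap {K : Type*} [Group K] (P Q R : K)
    (h1 : P * Q = Q * P) (h2 : P * R = R * P) (h3 : Q * R = R * Q) :
    P * (Q * R) = R * (Q * P) := by
  rw [h3, ← mul_assoc, h2, mul_assoc, h1]

/-- In a metabelian group, if `a ∈ [K,K]` then `⁅⁅a,u⁆,v⁆ = ⁅⁅a,v⁆,u⁆`. -/
lemma commutator_swap_of_mem {K : Type*} [Group K]
    (hK : ∀ p q : K, p ∈ commutator K → q ∈ commutator K → p * q = q * p)
    (a u v : K) (ha : a ∈ commutator K) : ⁅⁅a, u⁆, v⁆ = ⁅⁅a, v⁆, u⁆ := by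
  have hnorm : (commutator K).Normal := inferInstance
  have hau : u * a * u⁻¹ ∈ commutator K := hnorm.conj_mem a ha u
  have hav : v * a * v⁻¹ ∈ commutator K := hnorm.conj_mem a ha v
  have hW : u * (v * a * v⁻¹) * u⁻¹ ∈ commutator K := hnorm.conj_mem _ hav u
  have huv : ⁅u, v⁆ ∈ commutator K :=
    Subgroup.commutator_mem_commutator (Subgroup.mem_top u) (Subgroup.mem_top v)
  -- conjugates of `a` by `vu` and `uv` agree
  have hb : v * (u * a * u⁻¹) * v⁻¹ = u * (v * a * v⁻¹) * u⁻¹ := by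
    have h := hK _ _ hW huv
    calc v * (u * a * u⁻¹) * v⁻¹
        = ⁅u, v⁆⁻¹ * ((u * (v * a * v⁻¹) * u⁻¹) * ⁅u, v⁆) := by group
      _ = ⁅u, v⁆⁻¹ * (⁅u, v⁆ * (u * (v * a * v⁻¹) * u⁻¹)) := by rw [h]
      _ = u * (v * a * v⁻¹) * u⁻¹ := by group
  have hP : (u * a * u⁻¹)⁻¹ ∈ commutator K := inv_mem hau
  have hR : (v * a * v⁻¹)⁻¹ ∈ commutator K := inv_mem hav
  have h1 := hK _ _ hP hW
  have h2 := hK _ _ hP hR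
  have h3 := hK _ _ hW hR
  calc ⁅⁅a, u⁆, v⁆
      = a * ((u * a * u⁻¹)⁻¹ * ((v * (u * a * u⁻¹) * v⁻¹) * (v * a * v⁻¹)⁻¹)) := by group
    _ = a * ((u * a * u⁻¹)⁻¹ * ((u * (v * a * v⁻¹) * u⁻¹) * (v * a * v⁻¹)⁻¹)) := by rw [hb]
    _ = a * ((v * a * v⁻¹)⁻¹ * ((u * (v * a * v⁻¹) * u⁻¹) * (u * a * u⁻¹)⁻¹)) := by
        rw [three_swap _ _ _ h1 h2 h3]
    _ = ⁅⁅a, v⁆, u⁆ := by group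

/-- In the variety of metabelian groups, if `x ∈ [G,G]` and `x`, `[x,y]`, `[x,z]` all lie
in a subgroup `H`, then `[x,y,z]` lies in the dominion of `H` in `G`. -/
theorem commutator_mem_dominion_metabelian {G : Type*} [Group G]
    (hG : ∀ p q : G, p ∈ commutator G → q ∈ commutator G → p * q = q * p)
    (H : Subgroup G) (x y z : G) (hxc : x ∈ commutator G)
    (hx : x ∈ H) (hxy : ⁅x, y⁆ ∈ H) (hxz : ⁅x, z⁆ ∈ H) :
    ∀ (K : Type*) [Group K], (∀ p q : K, p ∈ commutator K → q ∈ commutator K → p * q = q * p) →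
      ∀ f g : G →* K, (∀ h ∈ H, f h = g h) → f ⁅⁅x, y⁆, z⁆ = g ⁅⁅x, y⁆, z⁆ := by
  intro K _ hK f g hfg
  have ha : f x = g x := hfg x hx
  have hfx : f x ∈ commutator K := by
    have : Subgroup.map f (commutator G) ≤ commutator K := by
      rw [commutator_def, Subgroup.map_commutator]
      exact Subgroup.commutator_mono le_top le_top
    exact this ⟨x, hxc, rfl⟩
  have hgx : g x ∈ commutator K := ha ▸ hfx
  have hb : ⁅f x, f y⁆ = ⁅g x, g y⁆ := by
    simpa only [map_commutatorElement] using hfg _ hxy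
  have hc : ⁅f x, f z⁆ = ⁅g x, g z⁆ := by
    simpa only [map_commutatorElement] using hfg _ hxz
  calc f ⁅⁅x, y⁆, z⁆ = ⁅⁅f x, f y⁆, f z⁆ := by simp [map_commutatorElement]
    _ = ⁅⁅f x, f z⁆, f y⁆ := commutator_swap_of_mem hK _ _ _ hfx
    _ = ⁅⁅g x, g z⁆, f y⁆ := by rw [hc]
    _ = ⁅⁅g x, f y⁆, g z⁆ := (commutator_swap_of_mem hK _ _ _ hgx).symm
    _ = ⁅⁅f x, f y⁆, g z⁆ := by rw [← ha]
    _ = ⁅⁅g x, g y⁆, g z⁆ := by rw [hb]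
    _ = g ⁅⁅x, y⁆, z⁆ := by simp [map_commutatorElement]
end
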